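/- arXiv:0712.4258 — 2 statements merged into one kernel-verified Lean document; each statement's English description precedes it below -/
import Mathlib

section
/- No unitary universal cloner: there is no unitary operator U on H ⊗ H and fixed unit vector e ∈ H such that U(ψ ⊗ e) = ψ ⊗ ψ for all unit vectors ψ ∈ H, provided dim H ≥ 2. (Proof: for unit vectors ψ, φ, unitarity gives ⟨ψ,φ⟩ = ⟨ψ,φ⟩², forcing ⟨ψ,φ⟩ ∈ {0,1}, which fails for non-orthogonal, non-parallel pairs.) -/
open Matrix

/-- The tensor product `u ⊗ v` of `u, v ∈ ℂⁿ`, as a vector in `ℂⁿ ⊗ ℂⁿ ≅ ℂ^(n×n)`. -/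
def tensorVec {n : ℕ} (u v : Fin n → ℂ) : Fin n × Fin n → ℂ := fun p => u p.1 * v p.2

lemma dot_tensor {n : ℕ} (u v a b : Fin n → ℂ) :
    star (tensorVec u v) ⬝ᵥ tensorVec a b = (star u ⬝ᵥ a) * (star v ⬝ᵥ b) := by
  simp only [dotProduct, tensorVec, Pi.star_apply, star_mul']
  rw [Fintype.sum_prod_type, Finset.sum_mul_sum]
  congr 1; ext i; congr 1; ext j; ring

/-- No unitary universal cloner: if `dim H ≥ 2`, there is no unitary `U` on
`H ⊗ H` and fixed unit ('blank') vector `e` such that `U (ψ ⊗ e) = ψ ⊗ ψ` for all unit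
vectors `ψ`. -/
theorem no_unitary_universal_cloner {n : ℕ} (hn : 2 ≤ n) :
    ¬ ∃ (U : Matrix (Fin n × Fin n) (Fin n × Fin n) ℂ) (e : Fin n → ℂ),
        U ∈ Matrix.unitaryGroup (Fin n × Fin n) ℂ ∧
        (∑ i, (starRingEnd ℂ) (e i) * e i = 1) ∧
        ∀ ψ : Fin n → ℂ, (∑ i, (starRingEnd ℂ) (ψ i) * ψ i = 1) →
          U.mulVec (tensorVec ψ e) = tensorVec ψ ψ := by
  rintro ⟨U, e, hU, he, hclone⟩
  have hU1 : star U * U = 1 := (Unitary.mem_iff.mp hU).1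
  have key : ∀ x y : Fin n × Fin n → ℂ,
      star (U.mulVec x) ⬝ᵥ U.mulVec y = star x ⬝ᵥ y := by
    intro x y
    rw [Matrix.star_mulVec, Matrix.dotProduct_mulVec, Matrix.vecMul_vecMul,
      ← Matrix.star_eq_conjTranspose, hU1, Matrix.vecMul_one]
  set i0 : Fin n := ⟨0, by omega⟩
  set i1 : Fin n := ⟨1, by omega⟩
  have h01 : i0 ≠ i1 := by simp [i0, i1, Fin.ext_iff]
  set c : ℂ := (((Real.sqrt 2)⁻¹ : ℝ) : ℂ)
  have hcr : (Real.sqrt 2)⁻¹ * (Real.sqrt 2)⁻¹ = 2⁻¹ := by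
    rw [← mul_inv]
    norm_num [Real.mul_self_sqrt]
  have hc : c * c = 2⁻¹ := by
    rw [show c = (((Real.sqrt 2)⁻¹ : ℝ) : ℂ) from rfl, ← Complex.ofReal_mul, hcr]
    norm_num
  set ψ : Fin n → ℂ := fun i => if i = i0 then 1 else 0
  set χ : Fin n → ℂ := fun i => if i = i0 then c else if i = i1 then c else 0
  have hψ : ∑ i, (starRingEnd ℂ) (ψ i) * ψ i = 1 := by
    rw [Finset.sum_eq_single i0]
    · simp [ψ]
    · intro b _ hb; simp [ψ, hb]
    · simp
  have hcc : (starRingEnd ℂ) c = c := by simp [c]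
  have hχsum : ∀ f : Fin n → ℂ,
      (∀ i, f i = (if i = i0 then (starRingEnd ℂ) (χ i0) * χ i0 else 0) +
        (if i = i1 then (starRingEnd ℂ) (χ i1) * χ i1 else 0)) →
      ∑ i, f i = 1 := by
    intro f hf
    have : ∑ i, f i = ((starRingEnd ℂ) (χ i0) * χ i0) + ((starRingEnd ℂ) (χ i1) * χ i1) := by
      rw [Finset.sum_congr rfl (fun i _ => hf i), Finset.sum_add_distrib]
      simp
    rw [this]
    have hχ0 : χ i0 = c := by simp [χ]
    have hχ1 : χ i1 = c := by simp [χ, Ne.symm h01]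
    rw [hχ0, hχ1, hcc, hc]
    norm_num
  have hχ : ∑ i, (starRingEnd ℂ) (χ i) * χ i = 1 := by
    apply hχsum
    intro i
    by_cases h0 : i = i0
    · subst h0; simp [h01]
    · by_cases h1 : i = i1
      · subst h1; simp [h01.symm, Ne.symm h01]
      · simp [χ, h0, h1]
  have h1 := hclone ψ hψ
  have h2 := hclone χ hχ
  have hdψχ : star ψ ⬝ᵥ χ = c := by
    simp only [dotProduct, Pi.star_apply]
    rw [Finset.sum_eq_single i0]
    · simp [ψ, χ]
    · intro b _ hb; simp [ψ, hb]
    · simp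
  have hde : star e ⬝ᵥ e = 1 := by
    simpa [dotProduct, Pi.star_apply] using he
  have hmain : star (tensorVec ψ e) ⬝ᵥ tensorVec χ e
      = star (tensorVec ψ ψ) ⬝ᵥ tensorVec χ χ := by
    rw [← h1, ← h2, key]
  rw [dot_tensor, dot_tensor, hdψχ, hde] at hmain
  have hdψψ : star ψ ⬝ᵥ ψ = 1 := by
    simpa [dotProduct, Pi.star_apply] using hψ
  have hdχχ : star χ ⬝ᵥ χ = 1 := by
    simpa [dotProduct, Pi.star_apply] using hχ
  -- hmain : c * 1 = c * c
  rw [hc] at hmain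
  have hfin : (((Real.sqrt 2)⁻¹ : ℝ) : ℂ) = (((2:ℝ)⁻¹ : ℝ) : ℂ) := by
    rw [mul_one] at hmain
    rw [show (((Real.sqrt 2)⁻¹ : ℝ) : ℂ) = c from rfl, hmain]
    norm_num
  have hr : (Real.sqrt 2)⁻¹ = (2:ℝ)⁻¹ := Complex.ofReal_inj.mp hfin
  have hs2 : Real.sqrt 2 = 2 := by
    rw [← inv_inv (Real.sqrt 2), hr]; norm_num
  have h4 := Real.sq_sqrt (show (0:ℝ) ≤ 2 by norm_num)
  rw [hs2] at h4
  norm_num at h4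
end

section
/- If a linear map U : H ⊗ H → H ⊗ H preserves inner products and satisfies U(ψ ⊗ e) = ψ ⊗ ψ for two particular unit vectors ψ = u and ψ = v, then ⟨u,v⟩ ∈ {0} ∪ {z : z = 1}; in particular no inner-product-preserving map can clone two distinct non-orthogonal unit vectors. -/
theorem tensorVec_inner {n : ℕ} (a b c d : Fin n → ℂ) :
    ∑ p, (starRingEnd ℂ) (tensorVec a b p) * tensorVec c d p
      = (∑ i, (starRingEnd ℂ) (a i) * c i) * (∑ j, (starRingEnd ℂ) (b j) * d j) := by
  simp only [tensorVec, map_mul, Fintype.sum_prod_type, Finset.sum_mul_sum]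
  exact Finset.sum_congr rfl fun i _ => Finset.sum_congr rfl fun j _ => by ring

theorem isIdempotentElem_inner_of_clones {n : ℕ}
    (U : (Fin n × Fin n → ℂ) → (Fin n × Fin n → ℂ))
    (hU : ∀ x y : Fin n × Fin n → ℂ,
      ∑ p, (starRingEnd ℂ) (U x p) * U y p = ∑ p, (starRingEnd ℂ) (x p) * y p)
    {e u v : Fin n → ℂ} (he : ∑ i, (starRingEnd ℂ) (e i) * e i = 1)
    (hcu : U (tensorVec u e) = tensorVec u u) (hcv : U (tensorVec v e) = tensorVec v v) :
    IsIdempotentElem (∑ i, (starRingEnd ℂ) (u i) * v i) := by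
  have h := hU (tensorVec u e) (tensorVec v e)
  rwa [hcu, hcv, tensorVec_inner, tensorVec_inner, he, mul_one] at h

theorem cloning_two_states_forces_overlap_zero_or_one_general {n : ℕ}
    (U : (Fin n × Fin n → ℂ) →ₗ[ℂ] (Fin n × Fin n → ℂ))
    (hU : ∀ x y : Fin n × Fin n → ℂ,
      ∑ p, (starRingEnd ℂ) (U x p) * U y p = ∑ p, (starRingEnd ℂ) (x p) * y p)
    (e u v : Fin n → ℂ)
    (he : ∑ i, (starRingEnd ℂ) (e i) * e i = 1)
    (hcu : U (tensorVec u e) = tensorVec u u)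
    (hcv : U (tensorVec v e) = tensorVec v v) :
    (∑ i, (starRingEnd ℂ) (u i) * v i = 0) ∨ (∑ i, (starRingEnd ℂ) (u i) * v i = 1) :=
  IsIdempotentElem.iff_eq_zero_or_one.mp (isIdempotentElem_inner_of_clones U hU he hcu hcv)

/-- If a linear map `U : H ⊗ H → H ⊗ H` preserves inner products and clones
two particular unit vectors `u` and `v` (i.e. `U (u ⊗ e) = u ⊗ u` and `U (v ⊗ e) = v ⊗ v`
for a fixed unit blank vector `e`), then `⟨u,v⟩ ∈ {0, 1}`; in particular no
inner-product-preserving map can clone two distinct non-orthogonal unit vectors. -/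
theorem cloning_two_states_forces_overlap_zero_or_one {n : ℕ}
    (U : (Fin n × Fin n → ℂ) →ₗ[ℂ] (Fin n × Fin n → ℂ))
    (hU : ∀ x y : Fin n × Fin n → ℂ,
      ∑ p, (starRingEnd ℂ) (U x p) * U y p = ∑ p, (starRingEnd ℂ) (x p) * y p)
    (e u v : Fin n → ℂ)
    (he : ∑ i, (starRingEnd ℂ) (e i) * e i = 1)
    (hu : ∑ i, (starRingEnd ℂ) (u i) * u i = 1)
    (hv : ∑ i, (starRingEnd ℂ) (v i) * v i = 1)
    (hcu : U (tensorVec u e) = tensorVec u u)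
    (hcv : U (tensorVec v e) = tensorVec v v) :
    (∑ i, (starRingEnd ℂ) (u i) * v i = 0) ∨ (∑ i, (starRingEnd ℂ) (u i) * v i = 1) :=
  cloning_two_states_forces_overlap_zero_or_one_general U hU e u v he hcu hcv
end
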